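/- Let S : [0,1] → ℝ^{n×n} be a smooth path of symmetric matrices, λ₀ ∈ (0,1), and let u ∈ C²([0,1],ℝⁿ) be a nonzero solution of u''(x) + λ₀² S(λ₀ x) u(x) = 0 with u(0) = 0 and u(1) = 0. Then u'(1) ≠ 0, and consequently the derivative at λ₀ of the function f(λ) = ∫₀¹ λ² ⟨S(λ x) u(x), u(x)⟩ dx satisfies f'(λ₀) = (1/λ₀)‖u'(1)‖² > 0; in particular, the quadratic form q̇_{λ₀}(u) = −f'(λ₀) is negative definite on the space of such solutions u. -/

import Mathlib

/-!
If `u'(1) = 0` as well as `u(1) = 0`, then `u` vanishes identically by uniqueness for the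
first-order system satisfied by `(u, u')`, so `u'(1) ≠ 0`. For the derivative, differentiate
under the integral sign; the derivative of the integrand at `λ₀` is `1/λ₀` times the
`x`-derivative of `x (λ₀² ⟪S(λ₀x)u, u⟫ + ‖u'‖²) - ⟪u', u⟫`, by the equation
`u'' = -λ₀² S(λ₀x) u` and the symmetry of `S`. This boundary term vanishes at `0` and equals
`‖u'(1)‖²` at `1`.
-/

open Set RealInnerProductSpace Filter Topology Function

noncomputable section

theorem ContDiffOn.hasDerivAt_derivWithin {F : Type*} [NormedAddCommGroup F] [NormedSpace ℝ F]
    {f : ℝ → F} {n : WithTop ℕ∞} {a b x : ℝ} (hf : ContDiffOn ℝ n f (Icc a b)) (hn : n ≠ 0)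
    (hx : x ∈ Ioo a b) : HasDerivAt f (derivWithin f (Icc a b) x) x :=
  (hf.differentiableOn hn x (Ioo_subset_Icc_self hx)).hasDerivWithinAt.hasDerivAt
    (Icc_mem_nhds hx.1 hx.2)

theorem intervalIntegral.hasDerivAt_integral_of_continuousOn {E : Type*} [NormedAddCommGroup E]
    [NormedSpace ℝ E] {F F' : ℝ → ℝ → E} {s : Set ℝ} {a b x₀ : ℝ} (hab : a ≤ b)
    (hs : IsCompact s) (hx₀ : s ∈ 𝓝 x₀) (hF : ContinuousOn (uncurry F) (s ×ˢ Icc a b))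
    (hF' : ContinuousOn (uncurry F') (s ×ˢ Icc a b))
    (hdiff : ∀ x ∈ s, ∀ t ∈ Ioc a b, HasDerivAt (F · t) (F' x t) x) :
    HasDerivAt (fun x ↦ ∫ t in a..b, F x t) (∫ t in a..b, F' x₀ t) x₀ := by
  have hslice : ∀ {G : ℝ → ℝ → E}, ContinuousOn (uncurry G) (s ×ˢ Icc a b) →
      ∀ x ∈ s, ContinuousOn (G x) (Icc a b) := fun hG x hx ↦
    hG.comp (Continuous.prodMk_right x).continuousOn fun _ ht ↦ ⟨hx, ht⟩
  obtain ⟨C, hC⟩ := (hs.prod isCompact_Icc).exists_bound_of_continuousOn hF'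
  have hx₀s := mem_of_mem_nhds hx₀
  refine (intervalIntegral.hasDerivAt_integral_of_dominated_loc_of_deriv_le (bound := fun _ ↦ C)
    hx₀ ?_ ((hslice hF x₀ hx₀s).intervalIntegrable_of_Icc hab) ?_ ?_ intervalIntegrable_const
    ?_).2 <;> simp only [uIoc_of_le hab]
  · filter_upwards [hx₀] with x hx
    exact ((hslice hF x hx).mono Ioc_subset_Icc_self).aestronglyMeasurable measurableSet_Ioc
  · exact ((hslice hF' x₀ hx₀s).mono Ioc_subset_Icc_self).aestronglyMeasurable measurableSet_Ioc
  · exact Eventually.of_forall fun t ht x hx ↦ hC (x, t) ⟨hx, Ioc_subset_Icc_self ht⟩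
  · exact Eventually.of_forall fun t ht x hx ↦ hdiff x hx t ht

theorem eqOn_zero_of_secondOrder_linear_ODE {E : Type*} [NormedAddCommGroup E]
    [NormedSpace ℝ E] {a b : ℝ} {A : ℝ → E →L[ℝ] E} (hA : ContinuousOn A (Icc a b))
    {u u' : ℝ → E} (hu : ∀ t ∈ Icc a b, HasDerivWithinAt u (u' t) (Icc a b) t)
    (hu' : ∀ t ∈ Icc a b, HasDerivWithinAt u' (A t (u t)) (Icc a b) t)
    (hb : u b = 0) (hb' : u' b = 0) : EqOn u 0 (Icc a b) := by
  obtain ⟨K, hK⟩ := (isCompact_Icc.image_of_continuousOn hA.nnnorm).bddAbove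
  have hlip : ∀ t ∈ Ioc a b,
      LipschitzOnWith (max 1 K) (fun p : E × E ↦ (p.2, A t p.1)) univ := fun t ht ↦
    (LipschitzWith.prod_snd.prodMk ((A t).lipschitz.comp LipschitzWith.prod_fst)).lipschitzOnWith
      |>.weaken (max_le_max le_rfl
        (by simpa using hK (mem_image_of_mem _ (Ioc_subset_Icc_self ht))))
  have hsol : ∀ t ∈ Ioc a b,
      HasDerivWithinAt (fun t ↦ (u t, u' t)) (u' t, A t (u t)) (Iic t) t := fun t ht ↦
    ((hu t (Ioc_subset_Icc_self ht)).prodMk (hu' t (Ioc_subset_Icc_self ht))).mono_of_mem_nhdsWithin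
      (Icc_mem_nhdsLE_of_mem ht)
  have hcont : ContinuousOn (fun t ↦ (u t, u' t)) (Icc a b) := fun t ht ↦
    (hu t ht).continuousWithinAt.prodMk (hu' t ht).continuousWithinAt
  have hzero : ∀ t, HasDerivWithinAt (fun _ ↦ (0 : E × E)) (0, A t 0) (Iic t) t := fun t ↦ by
    simpa [Prod.mk_zero_zero] using hasDerivWithinAt_const t (Iic t) (0 : E × E)
  have := ODE_solution_unique_of_mem_Icc_left hlip hcont hsol (fun _ _ ↦ mem_univ _)
    continuousOn_const (fun t _ ↦ hzero t) (fun _ _ ↦ mem_univ _) (by simp [hb, hb'])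
  exact fun t ht ↦ congrArg Prod.fst (this ht)

section

variable {E : Type*} [NormedAddCommGroup E] [InnerProductSpace ℝ E]

theorem HasDerivAt.inner_apply_self [CompleteSpace E] {A : ℝ → E →L[ℝ] E} {A' : E →L[ℝ] E}
    {u : ℝ → E} {u' : E} {x : ℝ} (hA : HasDerivAt A A' x) (hu : HasDerivAt u u' x)
    (hsym : IsSelfAdjoint (A x)) :
    HasDerivAt (fun y ↦ ⟪A y (u y), u y⟫) (⟪A' (u x), u x⟫ + 2 * ⟪A x (u x), u'⟫) x := by
  refine ((hA.clm_apply hu).inner ℝ hu).congr_deriv ?_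
  have := hsym.isSymmetric u' (u x)
  simp only [ContinuousLinearMap.coe_coe] at this
  rw [inner_add_left, this, real_inner_comm u' (A x (u x))]
  ring

theorem ContinuousOn.inner_apply_comp_mul {T : ℝ → E →L[ℝ] E} {u : ℝ → E} {s : Set ℝ}
    (hT : ContinuousOn T (Icc 0 1)) (hu : ContinuousOn u (Icc 0 1)) (hs : s ⊆ Icc 0 1) :
    ContinuousOn (fun p : ℝ × ℝ ↦ ⟪T (p.1 * p.2) (u p.2), u p.2⟫) (s ×ˢ Icc 0 1) := by
  have hmaps : MapsTo (fun p : ℝ × ℝ ↦ p.1 * p.2) (s ×ˢ Icc 0 1) (Icc 0 1) := fun p hp ↦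
    ⟨mul_nonneg (hs hp.1).1 hp.2.1, mul_le_one₀ (hs hp.1).2 hp.2.1 hp.2.2⟩
  have hu₂ : ContinuousOn (fun p : ℝ × ℝ ↦ u p.2) (s ×ˢ Icc 0 1) :=
    hu.comp continuousOn_snd fun _ hp ↦ hp.2
  exact ((hT.comp (continuous_fst.mul continuous_snd).continuousOn hmaps).clm_apply hu₂).inner hu₂

def crossingIntegrand (S : ℝ → E →L[ℝ] E) (u : ℝ → E) (l x : ℝ) : ℝ :=
  l ^ 2 * ⟪S (l * x) (u x), u x⟫

def crossingIntegrandDeriv (S : ℝ → E →L[ℝ] E) (u : ℝ → E) (l x : ℝ) : ℝ :=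
  2 * l * ⟪S (l * x) (u x), u x⟫ + l ^ 2 * x * ⟪derivWithin S (Icc 0 1) (l * x) (u x), u x⟫

theorem hasDerivAt_integral_crossingIntegrand {S : ℝ → E →L[ℝ] E}
    (hS : ContDiffOn ℝ 1 S (Icc 0 1)) {u : ℝ → E} (hu : ContinuousOn u (Icc 0 1)) {l₀ : ℝ}
    (hl₀ : l₀ ∈ Ioo 0 1) :
    HasDerivAt (fun l ↦ ∫ x in (0:ℝ)..1, crossingIntegrand S u l x)
      (∫ x in (0:ℝ)..1, crossingIntegrandDeriv S u l₀ x) l₀ := by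
  obtain ⟨hl0, hl1⟩ := hl₀
  have hs : Icc (l₀ / 2) ((1 + l₀) / 2) ⊆ Icc 0 1 := Icc_subset_Icc (by positivity) (by linarith)
  have hG := hS.continuousOn.inner_apply_comp_mul hu hs
  have hG' := (hS.continuousOn_derivWithin (uniqueDiffOn_Icc one_pos) le_rfl).inner_apply_comp_mul
    hu hs
  refine intervalIntegral.hasDerivAt_integral_of_continuousOn zero_le_one isCompact_Icc
    (Icc_mem_nhds (by linarith) (by linarith)) ((continuousOn_fst.pow 2).mul hG)
    (((continuousOn_const.mul continuousOn_fst).mul hG).add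
      (((continuousOn_fst.pow 2).mul continuousOn_snd).mul hG')) fun l hl x hx ↦ ?_
  have hl0' : 0 < l := (half_pos hl0).trans_le hl.1
  have hlx : l * x ∈ Ioo 0 1 :=
    ⟨mul_pos hl0' hx.1, (mul_le_of_le_one_right hl0'.le hx.2).trans_lt (by linarith [hl.2])⟩
  have hSx := (hS.hasDerivAt_derivWithin one_ne_zero hlx).scomp l (hasDerivAt_mul_const x)
  refine ((hasDerivAt_pow 2 l).mul ((hSx.clm_apply (hasDerivAt_const l (u x))).inner ℝ
    (hasDerivAt_const l (u x)))).congr_deriv ?_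
  simp only [crossingIntegrandDeriv, FunLike.coe_smul, Pi.smul_apply, map_zero, add_zero,
    inner_zero_right, real_inner_smul_left, comp_apply]
  ring

theorem integral_crossingIntegrandDeriv [CompleteSpace E] {S : ℝ → E →L[ℝ] E}
    (hS : ContDiffOn ℝ 1 S (Icc 0 1)) (hsym : ∀ x ∈ Icc (0:ℝ) 1, IsSelfAdjoint (S x))
    {l : ℝ} (hl : l ∈ Ioc 0 1) {u : ℝ → E} (hu : ContDiffOn ℝ 2 u (Icc 0 1))
    (hode : ∀ x ∈ Icc (0:ℝ) 1,
      derivWithin (derivWithin u (Icc 0 1)) (Icc 0 1) x + l ^ 2 • S (l * x) (u x) = 0)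
    (hu0 : u 0 = 0) (hu1 : u 1 = 0) :
    ∫ x in (0:ℝ)..1, crossingIntegrandDeriv S u l x = 1 / l * ‖derivWithin u (Icc 0 1) 1‖ ^ 2 := by
  set I := Icc (0:ℝ) 1
  set v := derivWithin u I
  obtain ⟨hl0, hl1⟩ := hl
  have hv : ContDiffOn ℝ 1 v I := hu.derivWithin (uniqueDiffOn_Icc one_pos) (by norm_num)
  have hcont : ∀ {T : ℝ → E →L[ℝ] E}, ContinuousOn T I →
      ContinuousOn (fun x ↦ ⟪T (l * x) (u x), u x⟫) I := fun hT ↦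
    (hT.inner_apply_comp_mul hu.continuousOn (singleton_subset_iff.2 ⟨hl0.le, hl1⟩)).comp
      (Continuous.prodMk_right l).continuousOn fun _ hx ↦ ⟨rfl, hx⟩
  have hderiv : ∀ x ∈ Ioo (0:ℝ) 1,
      HasDerivAt (fun x ↦ x * (crossingIntegrand S u l x + ‖v x‖ ^ 2) - ⟪v x, u x⟫)
        (l * crossingIntegrandDeriv S u l x) x := by
    intro x hx
    have hlx : l * x ∈ Ioo 0 1 :=
      ⟨mul_pos hl0 hx.1, (mul_le_of_le_one_left hx.1.le hl1).trans_lt hx.2⟩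
    have hu' : HasDerivAt u (v x) x := hu.hasDerivAt_derivWithin two_ne_zero hx
    have hv' := hv.hasDerivAt_derivWithin one_ne_zero hx
    rw [eq_neg_of_add_eq_zero_left (hode x (Ioo_subset_Icc_self hx))] at hv'
    have hSl : HasDerivAt (fun y ↦ S (l * y)) (l • derivWithin S I (l * x)) x := by
      have h := (hS.hasDerivAt_derivWithin one_ne_zero hlx).scomp x
        ((hasDerivAt_id x).const_mul l)
      rwa [mul_one] at h
    have hG := (hSl.inner_apply_self hu' (hsym _ (Ioo_subset_Icc_self hlx))).const_mul (l ^ 2)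
    refine (((hasDerivAt_id x).mul (hG.add hv'.norm_sq)).sub (hv'.inner ℝ hu')).congr_deriv ?_
    simp only [crossingIntegrandDeriv, FunLike.coe_smul, Pi.smul_apply, Pi.add_apply,
      real_inner_smul_left, inner_neg_left, inner_neg_right, real_inner_smul_right,
      real_inner_self_eq_norm_sq, id, real_inner_comm (v x)]
    ring
  have hG := hcont hS.continuousOn
  have hG' := hcont (hS.continuousOn_derivWithin (uniqueDiffOn_Icc one_pos) le_rfl)
  have hv₀ := hv.continuousOn
  have hu₀ := hu.continuousOn
  have hH := intervalIntegral.integral_eq_sub_of_hasDerivAt_of_le zero_le_one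
    (by unfold crossingIntegrand; fun_prop) hderiv
    ((by unfold crossingIntegrandDeriv; fun_prop : ContinuousOn _ I).intervalIntegrable_of_Icc
      zero_le_one)
  rw [intervalIntegral.integral_const_mul] at hH
  simp only [crossingIntegrand, hu0, hu1, map_zero, inner_zero_right, mul_zero, zero_add,
    zero_mul, one_mul, sub_zero] at hH
  rw [← hH]
  field_simp

end

/-- Regularity and negative definiteness of the crossing form: if `u` is a nonzero `C²`
solution of `u'' + λ₀² S(λ₀ x) u = 0` on `[0,1]` with `u 0 = u 1 = 0`, then `u'(1) ≠ 0`, and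
the function `f(λ) = ∫₀¹ λ² ⟪S(λx) u(x), u(x)⟫ dx` is differentiable at `λ₀` with derivative
`f'(λ₀) = (1/λ₀) ‖u'(1)‖² > 0`; in particular `q̇_{λ₀}(u) = −f'(λ₀) < 0`. -/
theorem crossing_form_negative_definite {n : ℕ}
    (S : ℝ → (EuclideanSpace ℝ (Fin n) →L[ℝ] EuclideanSpace ℝ (Fin n)))
    (hS : ContDiffOn ℝ (⊤ : ℕ∞) S (Icc 0 1))
    (hsym : ∀ x ∈ Icc (0:ℝ) 1, IsSelfAdjoint (S x))
    (l₀ : ℝ) (hl₀ : l₀ ∈ Ioo (0:ℝ) 1)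
    (u : ℝ → EuclideanSpace ℝ (Fin n))
    (hu : ContDiffOn ℝ 2 u (Icc 0 1))
    (hode : ∀ x ∈ Icc (0:ℝ) 1,
      derivWithin (derivWithin u (Icc 0 1)) (Icc 0 1) x + (l₀ ^ 2) • S (l₀ * x) (u x) = 0)
    (hu0 : u 0 = 0) (hu1 : u 1 = 0)
    (hne : ∃ x ∈ Icc (0:ℝ) 1, u x ≠ 0) :
    derivWithin u (Icc 0 1) 1 ≠ 0 ∧
      HasDerivAt (fun l : ℝ => ∫ x in (0:ℝ)..1, l ^ 2 * ⟪S (l * x) (u x), u x⟫)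
        ((1 / l₀) * ‖derivWithin u (Icc 0 1) 1‖ ^ 2) l₀ ∧
      0 < (1 / l₀) * ‖derivWithin u (Icc 0 1) 1‖ ^ 2 := by
  obtain ⟨hl0, hl1⟩ := hl₀
  have hS₁ : ContDiffOn ℝ 1 S (Icc 0 1) := hS.of_le (by exact_mod_cast le_top)
  have hu' : ContDiffOn ℝ 1 (derivWithin u (Icc 0 1)) (Icc 0 1) :=
    hu.derivWithin (uniqueDiffOn_Icc one_pos) (by norm_num)
  have hmaps : MapsTo (l₀ * ·) (Icc (0:ℝ) 1) (Icc 0 1) := fun x hx ↦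
    ⟨mul_nonneg hl0.le hx.1, mul_le_one₀ hl1.le hx.1 hx.2⟩
  have hSl : ContinuousOn (fun x ↦ S (l₀ * x)) (Icc 0 1) :=
    hS₁.continuousOn.comp (continuous_const_mul l₀).continuousOn hmaps
  have hA : ContinuousOn (fun x ↦ (-l₀ ^ 2) • S (l₀ * x)) (Icc 0 1) :=
    hSl.const_smul (-l₀ ^ 2)
  have hv1 : derivWithin u (Icc 0 1) 1 ≠ 0 := by
    intro hv1
    obtain ⟨x, hx, hux⟩ := hne
    refine hux (eqOn_zero_of_secondOrder_linear_ODE hA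
      (fun t ht ↦ (hu.differentiableOn two_ne_zero t ht).hasDerivWithinAt)
      (fun t ht ↦ ?_) hu1 hv1 hx)
    have h := (hu'.differentiableOn one_ne_zero t ht).hasDerivWithinAt
    rwa [eq_neg_of_add_eq_zero_left (hode t ht), ← neg_smul] at h
  have hpos : 0 < ‖derivWithin u (Icc 0 1) 1‖ := norm_pos_iff.2 hv1
  refine ⟨hv1, ?_, by positivity⟩
  rw [← integral_crossingIntegrandDeriv hS₁ hsym ⟨hl0, hl1.le⟩ hu hode hu0 hu1]
  exact hasDerivAt_integral_crossingIntegrand hS₁ hu.continuousOn ⟨hl0, hl1⟩
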